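/- For every valid SPGM S and every partial assignment y of a subset of its variables X ∪ Z, the evaluation of S equals the sum of the evaluations of all of its subtrees: S(y) = ∑_{τ ∈ T(S)} τ(y), where each τ(y) is computed by message passing within the subtree τ. -/

import Mathlib

attribute [local instance] Classical.propDecidable

noncomputable section

/-- Indicator variable `[v]_k` relative to a partial assignment `y`
(`y v = none` means `v` is unobserved). -/
def Indicator {Var : Type} (y : Var → Option ℕ) (v : Var) (k : ℕ) : ℝ :=
  match y v with
  | none => 1
  | some i => if i = k then 1 else 0

/-- Kinds of nodes of a sum-product graphical model: variable nodes (Vnodes),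
product nodes, observed sum nodes and unobserved sum nodes. -/
inductive SPGMKind (Xvar Zvar : Type) : Type where
  | vnode (x : Xvar)
  | prod
  | sumObs (z : Zvar)
  | sumUnobs

/-- A sum-product graphical model (SPGM) over variables `Xvar` (with domain sizes `Xdom`)
and context variables `Zvar` (with domain sizes `Zdom`).  The underlying directed graph
is given by `children`; acyclicity is encoded by the strictly decreasing `rank`.
`Q`/`W` are the edge weights of observed/unobserved sum nodes (`Q t k` is the weight of the
`k`-th child edge of `t`), `Pcond t s k j` is the conditional table `P_{s,t}(k | j)` used when
`s` is a Vparent of the Vnode `t`, and `Punary t k` is the unary table `P_t(k)` used when the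
Vnode `t` has no Vparent. -/
structure SPGM (Xvar Zvar : Type) (Xdom : Xvar → ℕ) (Zdom : Zvar → ℕ) where
  V : Type
  fintypeV : Fintype V
  decEqV : DecidableEq V
  root : V
  kind : V → SPGMKind Xvar Zvar
  children : V → List V
  rank : V → ℕ
  rank_lt : ∀ t c, c ∈ children t → rank c < rank t
  Q : V → ℕ → ℝ
  W : V → ℕ → ℝ
  Pcond : V → V → ℕ → ℕ → ℝ
  Punary : V → ℕ → ℝ

attribute [instance] SPGM.fintypeV SPGM.decEqV

namespace SPGM

variable {Xvar Zvar : Type} {Xdom : Xvar → ℕ} {Zdom : Zvar → ℕ}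

def isVnode (S : SPGM Xvar Zvar Xdom Zdom) (t : S.V) : Prop :=
  ∃ x, S.kind t = SPGMKind.vnode x

def isProd (S : SPGM Xvar Zvar Xdom Zdom) (t : S.V) : Prop :=
  S.kind t = SPGMKind.prod

def isSumObs (S : SPGM Xvar Zvar Xdom Zdom) (t : S.V) : Prop :=
  ∃ z, S.kind t = SPGMKind.sumObs z

def isSumUnobs (S : SPGM Xvar Zvar Xdom Zdom) (t : S.V) : Prop :=
  S.kind t = SPGMKind.sumUnobs

def isSum (S : SPGM Xvar Zvar Xdom Zdom) (t : S.V) : Prop :=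
  S.isSumObs t ∨ S.isSumUnobs t

/-- The variable labeling a node, if any. -/
def label (S : SPGM Xvar Zvar Xdom Zdom) (t : S.V) : Option (Xvar ⊕ Zvar) :=
  match S.kind t with
  | SPGMKind.vnode x => some (Sum.inl x)
  | SPGMKind.sumObs z => some (Sum.inr z)
  | _ => none

/-- Domain size of the variable of a Vnode (`0` for non-Vnodes). -/
def domOf (S : SPGM Xvar Zvar Xdom Zdom) (t : S.V) : ℕ :=
  match S.kind t with
  | SPGMKind.vnode x => Xdom x
  | _ => 0

/-- Reachability along directed edges. -/
def Reach (S : SPGM Xvar Zvar Xdom Zdom) : S.V → S.V → Prop :=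
  Relation.ReflTransGen fun a b => b ∈ S.children a

/-- The scope of a node: all variables labeling nodes of the sub-DAG rooted at it. -/
def scope (S : SPGM Xvar Zvar Xdom Zdom) (t : S.V) : Set (Xvar ⊕ Zvar) :=
  {v | ∃ u, S.Reach t u ∧ S.label u = some v}

/-- There is a (nonempty) directed path from `s` to `t` containing no intermediate Vnode. -/
inductive ReachNoV (S : SPGM Xvar Zvar Xdom Zdom) : S.V → S.V → Prop where
  | base {s c : S.V} : c ∈ S.children s → ReachNoV S s c
  | step {s t c : S.V} : ReachNoV S s t → ¬ S.isVnode t → c ∈ S.children t → ReachNoV S s c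

/-- `s` is a Vparent of `t`. -/
def vparent (S : SPGM Xvar Zvar Xdom Zdom) (s t : S.V) : Prop :=
  S.isVnode s ∧ S.ReachNoV s t

/-- Validity of an SPGM: structural conditions and nonnegativity of all parameters. -/
structure Valid (S : SPGM Xvar Zvar Xdom Zdom) : Prop where
  xdom_pos : ∀ x : Xvar, 0 < Xdom x
  zdom_pos : ∀ z : Zvar, 0 < Zdom z
  reach_root : ∀ v : S.V, S.Reach S.root v
  vnode_child : ∀ t : S.V, S.isVnode t → (S.children t).length ≤ 1
  vnode_scope : ∀ (t : S.V) (x : Xvar) (c : S.V), S.kind t = SPGMKind.vnode x →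
    c ∈ S.children t → Sum.inl x ∉ S.scope c
  sum_child : ∀ t : S.V, S.isSum t → S.children t ≠ []
  sumObs_card : ∀ (t : S.V) (z : Zvar), S.kind t = SPGMKind.sumObs z →
    (S.children t).length = Zdom z
  sum_scope : ∀ t : S.V, S.isSum t →
    ∀ c ∈ S.children t, ∀ c' ∈ S.children t, S.scope c = S.scope c'
  sumObs_scope : ∀ (t : S.V) (z : Zvar) (c : S.V), S.kind t = SPGMKind.sumObs z →
    c ∈ S.children t → Sum.inr z ∉ S.scope c
  prod_child : ∀ t : S.V, S.isProd t → S.children t ≠ []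
  prod_scope : ∀ t : S.V, S.isProd t →
    (S.children t).Pairwise fun c c' => Disjoint (S.scope c) (S.scope c')
  Q_nonneg : ∀ (t : S.V) (k : ℕ), 0 ≤ S.Q t k
  W_nonneg : ∀ (t : S.V) (k : ℕ), 0 ≤ S.W t k
  Pcond_nonneg : ∀ (t s : S.V) (k j : ℕ), 0 ≤ S.Pcond t s k j
  Punary_nonneg : ∀ (t : S.V) (k : ℕ), 0 ≤ S.Punary t k

/-- The conditional/unary tables of the SPGM are normalized probability tables. -/
structure Normalized (S : SPGM Xvar Zvar Xdom Zdom) : Prop where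
  Pcond_sum : ∀ t s : S.V, S.isVnode t → S.vparent s t → ∀ j < S.domOf s,
    ∑ k ∈ Finset.range (S.domOf t), S.Pcond t s k j = 1
  Punary_sum : ∀ t : S.V, S.isVnode t → (¬ ∃ s, S.vparent s t) →
    ∑ k ∈ Finset.range (S.domOf t), S.Punary t k = 1

/-- Message passing, with explicit fuel (the fuel never runs out thanks to `rank_lt`):
`msgAux S y n t s j` is the message `μ_{t→s;j}` (`s = none` denotes the fictitious root). -/
def msgAux (S : SPGM Xvar Zvar Xdom Zdom) (y : (Xvar ⊕ Zvar) → Option ℕ) :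
    ℕ → S.V → Option S.V → ℕ → ℝ
  | 0, _, _, _ => 1
  | n + 1, t, s, j =>
    match S.kind t with
    | SPGMKind.vnode x =>
        ∑ k ∈ Finset.range (Xdom x),
          (match s with
            | some s' => S.Pcond t s' k j
            | none => S.Punary t k) *
            Indicator y (Sum.inl x) k *
            (match S.children t with
              | [] => (1 : ℝ)
              | c :: _ => msgAux S y n c (some t) k)
    | SPGMKind.prod => ((S.children t).map fun c => msgAux S y n c s j).prod
    | SPGMKind.sumObs z =>
        ∑ k ∈ Finset.range (S.children t).length,
          Indicator y (Sum.inr z) k * S.Q t k * msgAux S y n ((S.children t).getD k t) s j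
    | SPGMKind.sumUnobs =>
        ∑ k ∈ Finset.range (S.children t).length,
          S.W t k * msgAux S y n ((S.children t).getD k t) s j

/-- The message `μ_{t→s;j}` sent by node `t` under partial assignment `y`. -/
def msg (S : SPGM Xvar Zvar Xdom Zdom) (y : (Xvar ⊕ Zvar) → Option ℕ)
    (t : S.V) (s : Option S.V) (j : ℕ) : ℝ :=
  msgAux S y (S.rank t + 1) t s j

/-- Evaluation of the SPGM at the partial assignment `y` (value of the root message). -/
def eval (S : SPGM Xvar Zvar Xdom Zdom) (y : (Xvar ⊕ Zvar) → Option ℕ) : ℝ :=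
  S.msg y S.root none 0

end SPGM

namespace SPGM

variable {Xvar Zvar : Type} {Xdom : Xvar → ℕ} {Zdom : Zvar → ℕ}

/-- Edge of the subtree determined by the choice function `σ`: a Vnode or product node keeps
all its child edges, a sum node `t` keeps only the edge to its `σ t`-th child. -/
def subEdge (S : SPGM Xvar Zvar Xdom Zdom) (σ : S.V → ℕ) (t c : S.V) : Prop :=
  (¬ S.isSum t ∧ c ∈ S.children t) ∨ (S.isSum t ∧ c = (S.children t).getD (σ t) t)

/-- `KeepAt S σ r v`: node `v` is kept in the subtree with root `r` determined by the
choice function `σ`. -/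
inductive KeepAt (S : SPGM Xvar Zvar Xdom Zdom) (σ : S.V → ℕ) : S.V → S.V → Prop where
  | refl (r : S.V) : KeepAt S σ r r
  | step {r t c : S.V} : KeepAt S σ r t → S.subEdge σ t c → KeepAt S σ r c

/-- Node `v` is kept in the subtree of `S` (rooted at the root of `S`) determined by `σ`. -/
def Keep (S : SPGM Xvar Zvar Xdom Zdom) (σ : S.V → ℕ) (v : S.V) : Prop :=
  KeepAt S σ S.root v

/-- The set of subtrees of the sub-SPGM rooted at `r`, represented by their canonical
choice functions: `σ t` is a valid child index at every sum node and is `0` at every node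
that is not a kept sum node.  Distinct canonical choice functions correspond exactly to
distinct subtrees. -/
def subtreesAt (S : SPGM Xvar Zvar Xdom Zdom) (r : S.V) : Set (S.V → ℕ) :=
  {σ | (∀ t : S.V, S.isSum t → σ t < (S.children t).length) ∧
       (∀ t : S.V, ¬ (KeepAt S σ r t ∧ S.isSum t) → σ t = 0)}

/-- The set `T(S)` of subtrees of `S`, represented by canonical choice functions. -/
def subtrees (S : SPGM Xvar Zvar Xdom Zdom) : Set (S.V → ℕ) :=
  S.subtreesAt S.root

/-- Message passing within the subtree determined by `σ` (with fuel, as in `msgAux`):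
at a sum node only the chosen child is used. -/
def msgSubAux (S : SPGM Xvar Zvar Xdom Zdom) (σ : S.V → ℕ)
    (y : (Xvar ⊕ Zvar) → Option ℕ) : ℕ → S.V → Option S.V → ℕ → ℝ
  | 0, _, _, _ => 1
  | n + 1, t, s, j =>
    match S.kind t with
    | SPGMKind.vnode x =>
        ∑ k ∈ Finset.range (Xdom x),
          (match s with
            | some s' => S.Pcond t s' k j
            | none => S.Punary t k) *
            Indicator y (Sum.inl x) k *
            (match S.children t with
              | [] => (1 : ℝ)
              | c :: _ => msgSubAux S σ y n c (some t) k)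
    | SPGMKind.prod => ((S.children t).map fun c => msgSubAux S σ y n c s j).prod
    | SPGMKind.sumObs z =>
        Indicator y (Sum.inr z) (σ t) * S.Q t (σ t) *
          msgSubAux S σ y n ((S.children t).getD (σ t) t) s j
    | SPGMKind.sumUnobs =>
        S.W t (σ t) * msgSubAux S σ y n ((S.children t).getD (σ t) t) s j

/-- The message `μ_{t→s;j}` computed within the subtree determined by `σ`. -/
def msgSub (S : SPGM Xvar Zvar Xdom Zdom) (σ : S.V → ℕ) (y : (Xvar ⊕ Zvar) → Option ℕ)
    (t : S.V) (s : Option S.V) (j : ℕ) : ℝ :=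
  msgSubAux S σ y (S.rank t + 1) t s j

/-- Evaluation of the subtree `τ` of `S` determined by `σ` at the partial assignment `y`. -/
def evalSub (S : SPGM Xvar Zvar Xdom Zdom) (σ : S.V → ℕ)
    (y : (Xvar ⊕ Zvar) → Option ℕ) : ℝ :=
  S.msgSub σ y S.root none 0

/-- An edge of `S` kept in the subtree determined by `σ`. -/
def keptEdge (S : SPGM Xvar Zvar Xdom Zdom) (σ : S.V → ℕ) (t c : S.V) : Prop :=
  S.Keep σ t ∧ S.subEdge σ t c

/-- The underlying undirected (simple) graph of the subtree determined by `σ`: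
vertices are the kept nodes, adjacency is the (undirected) kept-edge relation. -/
def subtreeGraph (S : SPGM Xvar Zvar Xdom Zdom) (σ : S.V → ℕ) : SimpleGraph S.V where
  Adj a b := a ≠ b ∧ S.Keep σ a ∧ S.Keep σ b ∧ (S.keptEdge σ a b ∨ S.keptEdge σ b a)
  symm := by
    constructor
    intro a b h
    exact ⟨Ne.symm h.1, h.2.2.1, h.2.1, h.2.2.2.symm⟩
  loopless := by
    constructor
    intro a h
    exact h.1 rfl

/-- The scope of the subtree determined by `σ`: all variables labeling kept nodes. -/
def subtreeScope (S : SPGM Xvar Zvar Xdom Zdom) (σ : S.V → ℕ) : Set (Xvar ⊕ Zvar) :=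
  {v | ∃ t : S.V, S.Keep σ t ∧ S.label t = some v}

/-- The coefficient `λ_τ` of the subtree determined by `σ`: the product of the weights of
all kept sum nodes. -/
def lam (S : SPGM Xvar Zvar Xdom Zdom) (σ : S.V → ℕ) : ℝ :=
  (∏ t : S.V, if S.Keep σ t ∧ S.isSumObs t then S.Q t (σ t) else 1) *
    (∏ t : S.V, if S.Keep σ t ∧ S.isSumUnobs t then S.W t (σ t) else 1)

/-- The product of the indicator variables in `z_τ` (one for each kept observed sum node),
evaluated relative to the partial assignment `y`. -/
def zInd (S : SPGM Xvar Zvar Xdom Zdom) (σ : S.V → ℕ)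
    (y : (Xvar ⊕ Zvar) → Option ℕ) : ℝ :=
  ∏ t : S.V,
    match S.kind t with
    | SPGMKind.sumObs z => if S.Keep σ t then Indicator y (Sum.inr z) (σ t) else 1
    | _ => 1

/-- Value of a total assignment `x` of the X-variables at a Vnode (`0` at other nodes). -/
def xval (S : SPGM Xvar Zvar Xdom Zdom) (x : Xvar → ℕ) (t : S.V) : ℕ :=
  match S.kind t with
  | SPGMKind.vnode xv => x xv
  | _ => 0

/-- A directed path along edges of the subtree determined by `σ` with no intermediate
Vnode. -/
inductive ReachNoVSub (S : SPGM Xvar Zvar Xdom Zdom) (σ : S.V → ℕ) : S.V → S.V → Prop where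
  | base {s c : S.V} : S.subEdge σ s c → ReachNoVSub S σ s c
  | step {s t c : S.V} : ReachNoVSub S σ s t → ¬ S.isVnode t → S.subEdge σ t c →
      ReachNoVSub S σ s c

/-- `s` is a Vparent of `t` within the subtree determined by `σ`. -/
def vparentSub (S : SPGM Xvar Zvar Xdom Zdom) (σ : S.V → ℕ) (s t : S.V) : Prop :=
  S.isVnode s ∧ ReachNoVSub S σ s t

/-- The tree graphical model distribution `P_τ` of the subtree determined by `σ`, as a
function of a total assignment `x` of the X-variables: the product of the unary tables of
the kept Vnodes without Vparent in the subtree and of the conditional tables of all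
Vparent-child Vnode pairs of the subtree. -/
def Ptau (S : SPGM Xvar Zvar Xdom Zdom) (σ : S.V → ℕ) (x : Xvar → ℕ) : ℝ :=
  (∏ t : S.V,
      if S.Keep σ t ∧ S.isVnode t ∧ ¬ (∃ s, S.Keep σ s ∧ S.vparentSub σ s t) then
        S.Punary t (S.xval x t)
      else 1) *
    ∏ p : S.V × S.V,
      if S.Keep σ p.1 ∧ S.Keep σ p.2 ∧ S.isVnode p.2 ∧ S.vparentSub σ p.1 p.2 then
        S.Pcond p.2 p.1 (S.xval x p.2) (S.xval x p.1)
      else 1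

/-- The number of edges of the DAG underlying `S`. -/
def edgeCount (S : SPGM Xvar Zvar Xdom Zdom) : ℕ :=
  ∑ v : S.V, (S.children v).length

end SPGM

/-!
By induction along the DAG, the message `μ_{t→s;j}` of every node `t` is the sum, over the
subtrees `τ` rooted at `t`, of the message of `t` computed within `τ`. At a sum node a subtree
is a choice of child `k` together with a subtree of the `k`-th child, so the weighted sum over
`k` expands into the sum over subtrees. At a product node the children have disjoint scopes,
hence (scopes being nonempty) disjoint sub-DAGs, so a subtree is an independent choice of one
subtree per child, glued together, and the product of sums distributes into a sum of products;
a Vnode has at most one child and is handled alike. The gluing is compatible with messages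
because a message computed within a subtree only depends on the choices made below its node.
-/

namespace SPGM

variable {Xvar Zvar : Type} {Xdom : Xvar → ℕ} {Zdom : Zvar → ℕ}
variable (S : SPGM Xvar Zvar Xdom Zdom)

/-- Forests of subtrees of `S`, one rooted at each node of `L`. -/
def subtreesAtList (L : List S.V) : Set (S.V → ℕ) :=
  {σ | (∀ t : S.V, S.isSum t → σ t < (S.children t).length) ∧
       (∀ t : S.V, ¬ ((∃ c ∈ L, S.KeepAt σ c t) ∧ S.isSum t) → σ t = 0)}

lemma subtreesAtList_singleton (c : S.V) : S.subtreesAtList [c] = S.subtreesAt c := by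
  simp only [subtreesAtList, subtreesAt, List.mem_singleton, exists_eq_left]

lemma subtreesAtList_finite (L : List S.V) : (S.subtreesAtList L).Finite := by
  refine (Set.Finite.pi fun u => Set.finite_Iic (S.children u).length).subset fun σ hσ u _ => ?_
  by_cases h : (∃ c ∈ L, S.KeepAt σ c u) ∧ S.isSum u
  · exact (hσ.1 u h.2).le
  · simp [hσ.2 u h]

lemma subtreesAt_finite (r : S.V) : (S.subtreesAt r).Finite :=
  S.subtreesAtList_singleton r ▸ S.subtreesAtList_finite [r]

def subtreesAtFinset (r : S.V) : Finset (S.V → ℕ) :=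
  (S.subtreesAt_finite r).toFinset

def subtreesAtListFinset (L : List S.V) : Finset (S.V → ℕ) :=
  (S.subtreesAtList_finite L).toFinset

variable {S}

lemma rank_le_of_reach {a b : S.V} (h : S.Reach a b) : S.rank b ≤ S.rank a := by
  induction h with
  | refl => exact le_rfl
  | tail _ hbc ih => exact (S.rank_lt _ _ hbc).le.trans ih

lemma reach_of_mem_children {t c : S.V} (h : c ∈ S.children t) : S.Reach t c :=
  .single h

lemma ne_of_mem_children_of_reach {t c u : S.V} (hc : c ∈ S.children t) (hu : S.Reach c u) :
    u ≠ t := by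
  rintro rfl
  exact absurd (rank_le_of_reach hu) (S.rank_lt u c hc).not_ge

lemma getD_mem_children {t : S.V} {k : ℕ} (hk : k < (S.children t).length) :
    (S.children t).getD k t ∈ S.children t := by
  rw [List.getD_eq_getElem _ _ hk]
  exact List.getElem_mem _

lemma reach_getD (t : S.V) (k : ℕ) : S.Reach t ((S.children t).getD k t) := by
  by_cases hk : k < (S.children t).length
  · exact reach_of_mem_children (getD_mem_children hk)
  · rw [List.getD_eq_default _ _ (not_lt.mp hk)]
    exact .refl

lemma scope_subset_of_reach {t u : S.V} (h : S.Reach t u) : S.scope u ⊆ S.scope t :=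
  fun _ ⟨w, hw, hl⟩ => ⟨w, h.trans hw, hl⟩

lemma scope_nonempty (hS : S.Valid) (t : S.V) : (S.scope t).Nonempty := by
  induction h : S.rank t using Nat.strong_induction_on generalizing t with
  | _ n ih =>
  have of_child : ∀ c ∈ S.children t, (S.scope t).Nonempty := fun c hc =>
    (ih _ (h ▸ S.rank_lt t c hc) c rfl).mono (scope_subset_of_reach (reach_of_mem_children hc))
  cases hk : S.kind t with
  | vnode x => exact ⟨.inl x, t, .refl, by simp [label, hk]⟩
  | sumObs z => exact ⟨.inr z, t, .refl, by simp [label, hk]⟩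
  | prod => exact of_child _ (List.exists_mem_of_ne_nil _ (hS.prod_child t hk)).choose_spec
  | sumUnobs =>
    exact of_child _ (List.exists_mem_of_ne_nil _ (hS.sum_child t (.inr hk))).choose_spec

lemma not_reach_of_disjoint_scope (hS : S.Valid) {c c' u : S.V}
    (h : Disjoint (S.scope c) (S.scope c')) (hc : S.Reach c u) : ¬ S.Reach c' u := fun hc' =>
  have ⟨_, hv⟩ := scope_nonempty hS u
  Set.disjoint_left.mp h (scope_subset_of_reach hc hv) (scope_subset_of_reach hc' hv)

section Keep

variable {σ σ' : S.V → ℕ}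

lemma reach_of_keepAt {r u : S.V} (h : S.KeepAt σ r u) : S.Reach r u := by
  induction h with
  | refl => exact .refl
  | @step t c _ he ih =>
    rcases he with ⟨-, hc⟩ | ⟨-, rfl⟩
    · exact ih.tail hc
    · exact ih.trans (reach_getD t (σ t))

lemma KeepAt.trans {a b c : S.V} (h₁ : S.KeepAt σ a b) (h₂ : S.KeepAt σ b c) :
    S.KeepAt σ a c := by
  induction h₂ with
  | refl => exact h₁
  | step _ he ih => exact ih.step he

lemma keepAt_congr {r : S.V} (h : ∀ u, S.Reach r u → σ u = σ' u) {u : S.V} :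
    S.KeepAt σ r u ↔ S.KeepAt σ' r u := by
  suffices ∀ {σ σ'}, (∀ u, S.Reach r u → σ u = σ' u) →
      ∀ {u}, S.KeepAt σ r u → S.KeepAt σ' r u
    from ⟨this h, this fun u hu => (h u hu).symm⟩
  intro σ σ' h u hu
  induction hu with
  | refl => exact .refl _
  | @step t _ hk he ih =>
    have hσt : σ t = σ' t := h t (reach_of_keepAt hk)
    exact ih.step (by unfold subEdge at he ⊢; rwa [← hσt])

lemma keepAt_iff_of_not_isSum {t : S.V} (ht : ¬ S.isSum t) {u : S.V} :
    S.KeepAt σ t u ↔ u = t ∨ ∃ c ∈ S.children t, S.KeepAt σ c u := by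
  refine ⟨fun h => ?_, ?_⟩
  · induction h with
    | refl => exact .inl rfl
    | step _ he ih =>
      rcases ih with rfl | ⟨c, hc, hkc⟩
      · rcases he with ⟨-, hm⟩ | ⟨hs, -⟩
        · exact .inr ⟨_, hm, .refl _⟩
        · exact absurd hs ht
      · exact .inr ⟨c, hc, hkc.step he⟩
  · rintro (rfl | ⟨c, hc, hkc⟩)
    · exact .refl _
    · exact KeepAt.trans ((KeepAt.refl t).step (.inl ⟨ht, hc⟩)) hkc

lemma keepAt_iff_of_isSum {t : S.V} (ht : S.isSum t) {u : S.V} :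
    S.KeepAt σ t u ↔ u = t ∨ S.KeepAt σ ((S.children t).getD (σ t) t) u := by
  refine ⟨fun h => ?_, ?_⟩
  · induction h with
    | refl => exact .inl rfl
    | step _ he ih =>
      rcases ih with rfl | hkc
      · rcases he with ⟨hns, -⟩ | ⟨-, rfl⟩
        · exact absurd ht hns
        · exact .inr (.refl _)
      · exact .inr (hkc.step he)
  · rintro (rfl | hkc)
    · exact .refl _
    · exact KeepAt.trans ((KeepAt.refl t).step (.inr ⟨ht, rfl⟩)) hkc

end Keep

lemma msgSubAux_congr {σ σ' : S.V → ℕ} (y : (Xvar ⊕ Zvar) → Option ℕ) (n : ℕ)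
    {t : S.V} (h : ∀ u, S.Reach t u → σ u = σ' u) (s : Option S.V) (j : ℕ) :
    S.msgSubAux σ y n t s j = S.msgSubAux σ' y n t s j := by
  induction n generalizing t s j with
  | zero => rfl
  | succ n ih =>
    have of_reach : ∀ {c}, S.Reach t c → ∀ s j,
        S.msgSubAux σ y n c s j = S.msgSubAux σ' y n c s j :=
      fun hc => ih fun u hu => h u (hc.trans hu)
    have hσt : σ t = σ' t := h t .refl
    cases hk : S.kind t with
    | vnode x =>
      cases hc : S.children t with
      | nil => simp only [msgSubAux, hk, hc]
      | cons c cs =>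
        simp only [msgSubAux, hk, hc,
          of_reach (reach_of_mem_children (hc ▸ List.mem_cons_self : c ∈ S.children t))]
    | prod =>
      simp only [msgSubAux, hk]
      exact congrArg List.prod
        (List.map_congr_left fun c hc => of_reach (reach_of_mem_children hc) s j)
    | sumObs z => simp only [msgSubAux, hk, hσt, of_reach (reach_getD t (σ' t))]
    | sumUnobs => simp only [msgSubAux, hk, hσt, of_reach (reach_getD t (σ' t))]

@[simp]
lemma mem_subtreesAtFinset {r : S.V} {σ : S.V → ℕ} :
    σ ∈ S.subtreesAtFinset r ↔ σ ∈ S.subtreesAt r :=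
  Set.Finite.mem_toFinset _

@[simp]
lemma mem_subtreesAtListFinset {L : List S.V} {σ : S.V → ℕ} :
    σ ∈ S.subtreesAtListFinset L ↔ σ ∈ S.subtreesAtList L :=
  Set.Finite.mem_toFinset _

lemma subtreesAtListFinset_singleton (c : S.V) :
    S.subtreesAtListFinset [c] = S.subtreesAtFinset c :=
  Set.Finite.toFinset_inj.mpr (S.subtreesAtList_singleton c)

lemma subtreesAtListFinset_nil (hS : S.Valid) : S.subtreesAtListFinset [] = {0} := by
  ext σ
  simp only [mem_subtreesAtListFinset, subtreesAtList, Finset.mem_singleton, List.not_mem_nil,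
    false_and, exists_false, not_false_eq_true, true_implies, Set.mem_ofPred_eq]
  refine ⟨fun hσ => funext hσ.2, ?_⟩
  rintro rfl
  exact ⟨fun u hu => List.length_pos_iff.mpr (hS.sum_child u hu), fun _ => rfl⟩

lemma subtreesAtFinset_eq_of_not_isSum {t : S.V} (ht : ¬ S.isSum t) :
    S.subtreesAtFinset t = S.subtreesAtListFinset (S.children t) := by
  refine Set.Finite.toFinset_inj.mpr (Set.ext fun σ => and_congr_right fun _ => ?_)
  refine forall_congr' fun u => imp_congr_left (not_congr (and_congr_left fun hu => ?_))
  rw [keepAt_iff_of_not_isSum ht]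
  exact or_iff_right (by rintro rfl; exact ht hu)

section SumNode

variable {t : S.V} {σ τ : S.V → ℕ}

lemma apply_eq_zero_of_not_reach {r u : S.V} (hσ : σ ∈ S.subtreesAt r) (hu : ¬ S.Reach r u) :
    σ u = 0 :=
  hσ.2 u fun h => hu (reach_of_keepAt h.1)

lemma update_apply_of_reach {c u : S.V} (hc : c ∈ S.children t) (hu : S.Reach c u) (k : ℕ) :
    Function.update τ t k u = τ u :=
  Function.update_of_ne (ne_of_mem_children_of_reach hc hu) _ _

lemma update_mem_subtreesAt (ht : S.isSum t) {k : ℕ} (hk : k < (S.children t).length)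
    (hτ : τ ∈ S.subtreesAt ((S.children t).getD k t)) :
    Function.update τ t k ∈ S.subtreesAt t := by
  have hc := getD_mem_children hk
  refine ⟨fun u hu => ?_, fun u hu => ?_⟩
  · rcases eq_or_ne u t with rfl | hne
    · simpa using hk
    · simpa [hne] using hτ.1 u hu
  · rcases eq_or_ne u t with rfl | hne
    · exact absurd ⟨.refl u, ht⟩ hu
    rw [Function.update_of_ne hne]
    refine hτ.2 u fun ⟨hkeep, hs⟩ => hu ⟨?_, hs⟩
    rw [keepAt_iff_of_isSum ht, Function.update_self,
      keepAt_congr fun v hv => update_apply_of_reach hc hv k]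
    exact .inr hkeep

lemma update_zero_mem_subtreesAt (ht : S.isSum t) (hσ : σ ∈ S.subtreesAt t) :
    Function.update σ t 0 ∈ S.subtreesAt ((S.children t).getD (σ t) t) := by
  have hc := getD_mem_children (hσ.1 t ht)
  refine ⟨fun u hu => ?_, fun u hu => ?_⟩
  · rcases eq_or_ne u t with rfl | hne
    · simpa using List.length_pos_iff.mpr (List.ne_nil_of_mem hc)
    · simpa [hne] using hσ.1 u hu
  · rcases eq_or_ne u t with rfl | hne
    · exact Function.update_self ..
    rw [Function.update_of_ne hne]
    refine hσ.2 u fun ⟨hkeep, hs⟩ => hu ⟨?_, hs⟩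
    rw [keepAt_iff_of_isSum ht, or_iff_right hne] at hkeep
    exact (keepAt_congr fun v hv => (update_apply_of_reach hc hv 0).symm).mp hkeep

lemma sum_subtreesAtFinset_of_isSum (ht : S.isSum t) (f : (S.V → ℕ) → ℝ) :
    ∑ σ ∈ S.subtreesAtFinset t, f σ = ∑ k ∈ Finset.range (S.children t).length,
      ∑ τ ∈ S.subtreesAtFinset ((S.children t).getD k t), f (Function.update τ t k) := by
  rw [Finset.sum_sigma']
  refine Finset.sum_nbij' (fun σ => ⟨σ t, Function.update σ t 0⟩)
    (fun p => Function.update p.2 t p.1) (fun σ hσ => ?_) (fun p hp => ?_) (fun σ _ => ?_)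
    (fun p hp => ?_) (fun σ _ => ?_)
  · rw [mem_subtreesAtFinset] at hσ
    simpa using ⟨hσ.1 t ht, update_zero_mem_subtreesAt ht hσ⟩
  · simp only [Finset.mem_sigma, Finset.mem_range, mem_subtreesAtFinset] at hp
    simpa using update_mem_subtreesAt ht hp.1 hp.2
  · simp
  · simp only [Finset.mem_sigma, Finset.mem_range, mem_subtreesAtFinset] at hp
    have h0 : p.2 t = 0 := apply_eq_zero_of_not_reach hp.2
      fun h => ne_of_mem_children_of_reach (getD_mem_children hp.1) h rfl
    have h_eq : Function.update p.2 t 0 = p.2 := h0 ▸ Function.update_eq_self t p.2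
    simp only [Function.update_self, Function.update_idem, h_eq]
  · simp

end SumNode

section ProdNode

variable {c : S.V} {L : List S.V} {σ σ₁ σ₂ : S.V → ℕ}

lemma apply_eq_zero_of_reach_of_disjoint (hS : S.Valid)
    (hdis : ∀ c' ∈ L, Disjoint (S.scope c) (S.scope c')) (hσ : σ ∈ S.subtreesAtList L)
    {u : S.V} (hu : S.Reach c u) : σ u = 0 :=
  hσ.2 u fun ⟨⟨c', hc', hk⟩, _⟩ =>
    not_reach_of_disjoint_scope hS (hdis c' hc') hu (reach_of_keepAt hk)

lemma ite_reach_mem_subtreesAtList_cons (hS : S.Valid)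
    (hdis : ∀ c' ∈ L, Disjoint (S.scope c) (S.scope c'))
    (h₁ : σ₁ ∈ S.subtreesAt c) (h₂ : σ₂ ∈ S.subtreesAtList L) :
    (fun u => if S.Reach c u then σ₁ u else σ₂ u) ∈ S.subtreesAtList (c :: L) := by
  have agree₁ : ∀ u, S.Reach c u → σ₁ u = if S.Reach c u then σ₁ u else σ₂ u :=
    fun u hu => (if_pos hu).symm
  have agree₂ : ∀ c' ∈ L, ∀ u, S.Reach c' u →
      σ₂ u = if S.Reach c u then σ₁ u else σ₂ u :=
    fun c' hc' u hu => (if_neg fun h => not_reach_of_disjoint_scope hS (hdis c' hc') h hu).symm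
  refine ⟨fun u hu => ?_, fun u hu => ?_⟩
  · dsimp only
    split_ifs
    exacts [h₁.1 u hu, h₂.1 u hu]
  · dsimp only
    split_ifs with h
    · refine h₁.2 u fun ⟨hk, hs⟩ => hu ⟨⟨c, List.mem_cons_self, ?_⟩, hs⟩
      exact (keepAt_congr agree₁).mp hk
    · refine h₂.2 u fun ⟨⟨c', hc', hk⟩, hs⟩ => hu ⟨⟨c', .tail _ hc', ?_⟩, hs⟩
      exact (keepAt_congr (agree₂ c' hc')).mp hk

lemma ite_reach_zero_mem_subtreesAt (hS : S.Valid)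
    (hdis : ∀ c' ∈ L, Disjoint (S.scope c) (S.scope c'))
    (hσ : σ ∈ S.subtreesAtList (c :: L)) :
    (fun u => if S.Reach c u then σ u else 0) ∈ S.subtreesAt c := by
  refine ⟨fun u hu => ?_, fun u hu => ?_⟩
  · dsimp only
    split_ifs
    exacts [hσ.1 u hu, List.length_pos_iff.mpr (hS.sum_child u hu)]
  · dsimp only
    split_ifs with h
    · refine hσ.2 u fun ⟨⟨c', hc', hk⟩, hs⟩ => ?_
      rcases List.mem_cons.mp hc' with rfl | hc'
      · exact hu ⟨(keepAt_congr fun v hv => (if_pos hv).symm).mp hk, hs⟩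
      · exact not_reach_of_disjoint_scope hS (hdis c' hc') h (reach_of_keepAt hk)
    · rfl

lemma ite_reach_zero_mem_subtreesAtList (hS : S.Valid)
    (hdis : ∀ c' ∈ L, Disjoint (S.scope c) (S.scope c'))
    (hσ : σ ∈ S.subtreesAtList (c :: L)) :
    (fun u => if S.Reach c u then 0 else σ u) ∈ S.subtreesAtList L := by
  refine ⟨fun u hu => ?_, fun u hu => ?_⟩
  · dsimp only
    split_ifs
    exacts [List.length_pos_iff.mpr (hS.sum_child u hu), hσ.1 u hu]
  · dsimp only
    split_ifs with h
    · rfl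
    · refine hσ.2 u fun ⟨⟨c', hc', hk⟩, hs⟩ => ?_
      rcases List.mem_cons.mp hc' with rfl | hc'
      · exact h (reach_of_keepAt hk)
      · refine hu ⟨⟨c', hc', (keepAt_congr fun v hv => ?_).mp hk⟩, hs⟩
        exact (if_neg fun h' => not_reach_of_disjoint_scope hS (hdis c' hc') h' hv).symm

lemma sum_subtreesAtListFinset_cons (hS : S.Valid)
    (hdis : ∀ c' ∈ L, Disjoint (S.scope c) (S.scope c')) (f : (S.V → ℕ) → ℝ) :
    ∑ σ ∈ S.subtreesAtListFinset (c :: L), f σ =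
      ∑ σ₁ ∈ S.subtreesAtFinset c, ∑ σ₂ ∈ S.subtreesAtListFinset L,
        f fun u => if S.Reach c u then σ₁ u else σ₂ u := by
  rw [← Finset.sum_product']
  refine Finset.sum_nbij'
    (fun σ => (fun u => if S.Reach c u then σ u else 0, fun u => if S.Reach c u then 0 else σ u))
    (fun p u => if S.Reach c u then p.1 u else p.2 u) (fun σ hσ => ?_) (fun p hp => ?_)
    (fun σ _ => ?_) (fun p hp => ?_) (fun σ _ => ?_)
  · rw [mem_subtreesAtListFinset] at hσ
    simpa using ⟨ite_reach_zero_mem_subtreesAt hS hdis hσ,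
      ite_reach_zero_mem_subtreesAtList hS hdis hσ⟩
  · simp only [Finset.mem_product, mem_subtreesAtFinset, mem_subtreesAtListFinset] at hp
    simpa using ite_reach_mem_subtreesAtList_cons hS hdis hp.1 hp.2
  · funext u
    dsimp only
    split_ifs <;> rfl
  · simp only [Finset.mem_product, mem_subtreesAtFinset, mem_subtreesAtListFinset] at hp
    refine Prod.ext (funext fun u => ?_) (funext fun u => ?_) <;> dsimp only <;> split_ifs with h
    · rfl
    · exact (apply_eq_zero_of_not_reach hp.1 h).symm
    · exact (apply_eq_zero_of_reach_of_disjoint hS hdis hp.2 h).symm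
    · rfl
  · congr 1
    funext u
    dsimp only
    split_ifs <;> rfl

lemma prod_sum_subtreesAtFinset (hS : S.Valid) (g : (S.V → ℕ) → S.V → ℝ) :
    ∀ L : List S.V, L.Pairwise (fun c c' => Disjoint (S.scope c) (S.scope c')) →
      (∀ c ∈ L, ∀ σ σ' : S.V → ℕ, (∀ u, S.Reach c u → σ u = σ' u) →
        g σ c = g σ' c) →
      (L.map fun c => ∑ σ ∈ S.subtreesAtFinset c, g σ c).prod =
        ∑ σ ∈ S.subtreesAtListFinset L, (L.map fun c => g σ c).prod
  | [], _, _ => by simp [subtreesAtListFinset_nil hS]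
  | c :: L, hpw, hg => by
    rw [List.pairwise_cons] at hpw
    rw [sum_subtreesAtListFinset_cons hS hpw.1, List.map_cons, List.prod_cons,
      prod_sum_subtreesAtFinset hS g L hpw.2 fun c' hc' => hg c' (List.mem_cons_of_mem _ hc'),
      Finset.sum_mul_sum]
    refine Finset.sum_congr rfl fun σ₁ _ => Finset.sum_congr rfl fun σ₂ _ => ?_
    rw [List.map_cons, List.prod_cons, hg c List.mem_cons_self _ _ fun u hu => (if_pos hu).symm]
    congr 1
    refine congrArg List.prod (List.map_congr_left fun c' hc' => hg c' ?_ _ _ fun u hu => ?_)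
    · exact List.mem_cons_of_mem _ hc'
    · exact (if_neg fun h => not_reach_of_disjoint_scope hS (hpw.1 c' hc') h hu).symm

end ProdNode

lemma sum_mul_sum_subtreesAtFinset_of_isSum {t : S.V} (ht : S.isSum t) (w : ℕ → ℝ)
    (F : S.V → ℝ) (g : (S.V → ℕ) → S.V → ℝ)
    (hF : ∀ c ∈ S.children t, F c = ∑ σ ∈ S.subtreesAtFinset c, g σ c)
    (hg : ∀ c ∈ S.children t, ∀ σ σ' : S.V → ℕ,
      (∀ u, S.Reach c u → σ u = σ' u) → g σ c = g σ' c) :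
    ∑ k ∈ Finset.range (S.children t).length, w k * F ((S.children t).getD k t) =
      ∑ σ ∈ S.subtreesAtFinset t, w (σ t) * g σ ((S.children t).getD (σ t) t) := by
  rw [sum_subtreesAtFinset_of_isSum ht]
  refine Finset.sum_congr rfl fun k hk => ?_
  have hc := getD_mem_children (Finset.mem_range.mp hk)
  rw [hF _ hc, Finset.mul_sum]
  refine Finset.sum_congr rfl fun τ _ => ?_
  rw [Function.update_self, hg _ hc _ _ fun u hu => (update_apply_of_reach hc hu k).symm]

/-- Stated at every fuel level, since both sides then unfold in lockstep and no
fuel-independence lemma is needed. -/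
theorem msgAux_eq_sum_msgSubAux (hS : S.Valid) (y : (Xvar ⊕ Zvar) → Option ℕ) (n : ℕ)
    {t : S.V} (ht : S.rank t < n) (s : Option S.V) (j : ℕ) :
    S.msgAux y n t s j = ∑ σ ∈ S.subtreesAtFinset t, S.msgSubAux σ y n t s j := by
  induction n generalizing t s j with
  | zero => exact absurd ht (Nat.not_lt_zero _)
  | succ n ih =>
  have ih' : ∀ s j, ∀ c ∈ S.children t,
      S.msgAux y n c s j = ∑ σ ∈ S.subtreesAtFinset c, S.msgSubAux σ y n c s j :=
    fun s j c hc => ih (by have := S.rank_lt t c hc; omega) s j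
  have locality : ∀ s j, ∀ c ∈ S.children t, ∀ σ σ', (∀ u, S.Reach c u → σ u = σ' u) →
      S.msgSubAux σ y n c s j = S.msgSubAux σ' y n c s j :=
    fun s j _ _ _ _ h => msgSubAux_congr y n h s j
  cases hk : S.kind t with
  | vnode x =>
    rw [subtreesAtFinset_eq_of_not_isSum (by simp [isSum, isSumObs, isSumUnobs, hk])]
    rcases hc : S.children t with _ | ⟨c, _ | ⟨c', cs⟩⟩
    · simp only [msgAux, msgSubAux, hk, hc, subtreesAtListFinset_nil hS, Finset.sum_singleton]
    · have hc' : c ∈ S.children t := hc ▸ List.mem_cons_self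
      simp only [msgAux, msgSubAux, hk, hc, subtreesAtListFinset_singleton, ih' _ _ c hc',
        Finset.mul_sum]
      exact Finset.sum_comm
    · simpa [hc] using hS.vnode_child t ⟨x, hk⟩
  | prod =>
    rw [subtreesAtFinset_eq_of_not_isSum (by simp [isSum, isSumObs, isSumUnobs, hk])]
    simp only [msgAux, msgSubAux, hk]
    rw [List.map_congr_left (ih' s j)]
    exact prod_sum_subtreesAtFinset hS _ _ (hS.prod_scope t hk) (locality s j)
  | sumObs z =>
    simp only [msgAux, msgSubAux, hk]
    exact sum_mul_sum_subtreesAtFinset_of_isSum (.inl ⟨z, hk⟩)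
      (fun k => Indicator y (.inr z) k * S.Q t k) _ _ (ih' s j) (locality s j)
  | sumUnobs =>
    simp only [msgAux, msgSubAux, hk]
    exact sum_mul_sum_subtreesAtFinset_of_isSum (.inr hk) (S.W t) _ _ (ih' s j)
      (locality s j)

end SPGM

theorem spgm_eval_eq_sum_subtrees_general {Xvar Zvar : Type} {Xdom : Xvar → ℕ} {Zdom : Zvar → ℕ}
    (S : SPGM Xvar Zvar Xdom Zdom) (hS : S.Valid)
    (y : (Xvar ⊕ Zvar) → Option ℕ) :
    S.eval y = ∑ᶠ σ ∈ S.subtrees, S.evalSub σ y := by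
  rw [SPGM.subtrees, finsum_mem_eq_finite_toFinset_sum _ (S.subtreesAt_finite S.root)]
  exact S.msgAux_eq_sum_msgSubAux hS y _ (Nat.lt_succ_self _) none 0

/-- For every valid SPGM `S` and every partial assignment `y` of a
subset of its variables, the evaluation of `S` equals the sum of the evaluations of all
of its subtrees (each computed by message passing within the subtree):
`S(y) = ∑_{τ ∈ T(S)} τ(y)`. -/
theorem spgm_eval_eq_sum_subtrees {Xvar Zvar : Type} {Xdom : Xvar → ℕ} {Zdom : Zvar → ℕ}
    (S : SPGM Xvar Zvar Xdom Zdom) (hS : S.Valid) (hN : S.Normalized)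
    (y : (Xvar ⊕ Zvar) → Option ℕ) :
    S.eval y = ∑ᶠ σ ∈ S.subtrees, S.evalSub σ y :=
  spgm_eval_eq_sum_subtrees_general S hS y
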